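/- Let G=(V,E) be a finite simple graph, ω: E → ℚ an edge-weight function, and let χ, χ': V → {1,…,c} be c-colorings of G. Let S' := D_flip(χ,χ') and let 𝒞 be the set of connected components of the induced subgraph G[S']. For each C ∈ 𝒞, let E⁺_C := (E(C,V) ∩ E(χ')) \ E(χ) and E⁻_C := (E(C,V) ∩ E(χ)) \ E(χ'), where E(C,V) is the set of edges of G with at least one endpoint in C. Then ω(E(χ')) − ω(E(χ)) = Σ_{C ∈ 𝒞} (ω(E⁺_C) − ω(E⁻_C)). -/

import Mathlib

open Finset
open scoped Classical

/-- The finset of properly colored edges of `G` under the coloring `χ`. -/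
noncomputable def properEdges {V : Type*} [Fintype V] {α : Type*}
    (G : SimpleGraph V) (χ : V → α) : Finset (Sym2 V) :=
  G.edgeFinset.filter fun e => ¬ (Sym2.map χ e).IsDiag

/-- The flip between two colorings: the set of vertices where they differ. -/
noncomputable def flipSet {V : Type*} [Fintype V] {α : Type*}
    (χ χ' : V → α) : Finset V :=
  univ.filter fun v => χ v ≠ χ' v

/-- The set of connected components of the subgraph of `G` induced by `S`,
as a finset of connected components of `G.induce S`. -/
noncomputable def componentsOf {V : Type*} [Fintype V] (G : SimpleGraph V)
    (S : Finset V) : Finset ((G.induce (↑S : Set V)).ConnectedComponent) :=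
  (Finset.univ : Finset (↑S : Set V)).image
    (G.induce (↑S : Set V)).connectedComponentMk

/-- The vertex set (as a finset of vertices of `G`) of a connected component
of the subgraph of `G` induced by `S`. -/
noncomputable def compVerts {V : Type*} [Fintype V] (G : SimpleGraph V)
    (S : Finset V) (C : (G.induce (↑S : Set V)).ConnectedComponent) : Finset V :=
  S.filter fun x =>
    ∃ h : x ∈ (↑S : Set V), (G.induce (↑S : Set V)).connectedComponentMk ⟨x, h⟩ = C

/-- The edges of `G` with at least one endpoint in `A`. -/
noncomputable def edgesTouching {V : Type*} [Fintype V] (G : SimpleGraph V)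
    (A : Finset V) : Finset (Sym2 V) :=
  G.edgeFinset.filter fun e => ∃ x ∈ e, x ∈ A


/-! An edge can change from improper to proper, or back, only if one of its endpoints changes
color, i.e. lies in the flip set `S'`. Moreover an edge of `G` meets at most one component of
`G[S']`, because an edge with both endpoints in `S'` is an edge of `G[S']`. So the components
partition the symmetric difference of `E(χ)` and `E(χ')` into the sets `E⁺_C` and `E⁻_C`, and
the identity follows by summing over this partition. -/

section Coloring

variable {V : Type*} [Fintype V] {α : Type*} {G : SimpleGraph V}

lemma properEdges_subset_edgeFinset (χ : V → α) : properEdges G χ ⊆ G.edgeFinset :=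
  filter_subset _ _

lemma mem_properEdges_mk {χ : V → α} {u v : V} :
    s(u, v) ∈ properEdges G χ ↔ G.Adj u v ∧ χ u ≠ χ v := by
  simp [properEdges]

lemma flipSet_comm (χ χ' : V → α) : flipSet χ χ' = flipSet χ' χ := by
  ext v
  simp [flipSet, ne_comm]

lemma exists_mem_flipSet_of_mem_properEdges_of_notMem {χ χ' : V → α} {e : Sym2 V}
    (he : e ∈ properEdges G χ) (he' : e ∉ properEdges G χ') : ∃ x ∈ e, x ∈ flipSet χ χ' := by
  induction e using Sym2.ind with
  | _ u v =>
    by_contra! hfix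
    have hu : χ u = χ' u := by simpa [flipSet] using hfix u (Sym2.mem_mk_left u v)
    have hv : χ v = χ' v := by simpa [flipSet] using hfix v (Sym2.mem_mk_right u v)
    rw [mem_properEdges_mk, hu, hv] at he
    exact he' (mem_properEdges_mk.mpr he)

end Coloring

section Components

variable {V : Type*} [Fintype V] (G : SimpleGraph V) (S : Finset V)

lemma mem_compVerts_connectedComponentMk {x : V} (hx : x ∈ (↑S : Set V)) :
    x ∈ compVerts G S ((G.induce (↑S : Set V)).connectedComponentMk ⟨x, hx⟩) := by
  simp only [compVerts, mem_filter]
  exact ⟨hx, hx, trivial⟩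

variable {G S}

lemma mem_edgesTouching {A : Finset V} {e : Sym2 V} :
    e ∈ edgesTouching G A ↔ e ∈ G.edgeFinset ∧ ∃ x ∈ e, x ∈ A := by
  rw [edgesTouching, mem_filter]

lemma eq_of_mem_compVerts {C C' : (G.induce (↑S : Set V)).ConnectedComponent} {x : V}
    (hx : x ∈ compVerts G S C) (hx' : x ∈ compVerts G S C') : C = C' := by
  simp only [compVerts, mem_filter] at hx hx'
  obtain ⟨_, _, rfl⟩ := hx
  obtain ⟨_, _, rfl⟩ := hx'
  rfl

lemma mem_compVerts_of_adj {C : (G.induce (↑S : Set V)).ConnectedComponent} {x y : V}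
    (hx : x ∈ compVerts G S C) (hy : y ∈ S) (hxy : G.Adj x y) : y ∈ compVerts G S C := by
  simp only [compVerts, mem_filter] at hx ⊢
  obtain ⟨_, hx, rfl⟩ := hx
  refine ⟨hy, hy, ?_⟩
  exact SimpleGraph.ConnectedComponent.connectedComponentMk_eq_of_adj
    (show (G.induce (↑S : Set V)).Adj ⟨y, hy⟩ ⟨x, hx⟩ from hxy.symm)

lemma eq_of_mem_edgesTouching_compVerts {C C' : (G.induce (↑S : Set V)).ConnectedComponent}
    {e : Sym2 V} (he : e ∈ edgesTouching G (compVerts G S C))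
    (he' : e ∈ edgesTouching G (compVerts G S C')) : C = C' := by
  rw [mem_edgesTouching, SimpleGraph.mem_edgeFinset] at he he'
  obtain ⟨hE, x, hxe, hxC⟩ := he
  obtain ⟨-, y, hye, hyC'⟩ := he'
  by_cases hxy : x = y
  · exact eq_of_mem_compVerts hxC (hxy ▸ hyC')
  · rw [(Sym2.mem_and_mem_iff hxy).mp ⟨hxe, hye⟩] at hE
    have hyS : y ∈ S := (mem_filter.mp hyC').1
    exact eq_of_mem_compVerts (mem_compVerts_of_adj hxC hyS hE) hyC'

lemma sum_eq_sum_componentsOf [DecidableEq V] {M : Type*} [AddCommMonoid M] (f : Sym2 V → M)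
    {X : Finset (Sym2 V)} (hX : X ⊆ G.edgeFinset) (hXS : ∀ e ∈ X, ∃ x ∈ e, x ∈ S) :
    ∑ e ∈ X, f e =
      ∑ C ∈ componentsOf G S, ∑ e ∈ edgesTouching G (compVerts G S C) ∩ X, f e := by
  have hcover : (componentsOf G S).biUnion (fun C => edgesTouching G (compVerts G S C) ∩ X)
      = X := by
    refine (biUnion_subset.mpr fun _ _ => inter_subset_right).antisymm fun e he => ?_
    obtain ⟨x, hxe, hxS⟩ := hXS e he
    refine mem_biUnion.mpr ⟨_, mem_image_of_mem _ (mem_univ ⟨x, hxS⟩), mem_inter.mpr ⟨?_, he⟩⟩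
    exact mem_edgesTouching.mpr ⟨hX he, x, hxe, mem_compVerts_connectedComponentMk G S hxS⟩
  have hdisj : (↑(componentsOf G S) : Set _).PairwiseDisjoint
      (fun C => edgesTouching G (compVerts G S C) ∩ X) := by
    intro C _ C' _ hne
    refine disjoint_left.mpr fun e he he' => hne ?_
    exact eq_of_mem_edgesTouching_compVerts (mem_inter.mp he).1 (mem_inter.mp he').1
  rw [← sum_biUnion hdisj, hcover]

end Components

/-- Decomposition of the improvement `ω(E(χ')) - ω(E(χ))` along the connected
components `C` of the subgraph induced by the flip `S' = D_flip(χ,χ')`: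
it equals the sum over all components `C` of `ω(E⁺_C) - ω(E⁻_C)`, where
`E⁺_C = (E(C,V) ∩ E(χ')) \ E(χ)` and `E⁻_C = (E(C,V) ∩ E(χ)) \ E(χ')`. -/
theorem improvement_eq_sum_over_components
    {V : Type*} [Fintype V] [DecidableEq V] {c : ℕ}
    (G : SimpleGraph V) (ω : Sym2 V → ℚ) (χ χ' : V → Fin c) :
    (∑ e ∈ properEdges G χ', ω e) - (∑ e ∈ properEdges G χ, ω e) =
      ∑ C ∈ componentsOf G (flipSet χ χ'),
        ((∑ e ∈ (edgesTouching G (compVerts G (flipSet χ χ') C) ∩ properEdges G χ') \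
              properEdges G χ, ω e) -
          (∑ e ∈ (edgesTouching G (compVerts G (flipSet χ χ') C) ∩ properEdges G χ) \
              properEdges G χ', ω e)) := by
  have hplus : ∀ e ∈ properEdges G χ' \ properEdges G χ, ∃ x ∈ e, x ∈ flipSet χ χ' := by
    rw [flipSet_comm]
    exact fun _ he => (mem_sdiff.mp he).elim exists_mem_flipSet_of_mem_properEdges_of_notMem
  have hminus : ∀ e ∈ properEdges G χ \ properEdges G χ', ∃ x ∈ e, x ∈ flipSet χ χ' :=
    fun _ he => (mem_sdiff.mp he).elim exists_mem_flipSet_of_mem_properEdges_of_notMem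
  simp_rw [sum_sub_distrib, inter_sdiff_assoc]
  rw [← sum_sdiff_sub_sum_sdiff,
    sum_eq_sum_componentsOf ω (sdiff_subset.trans (properEdges_subset_edgeFinset _)) hplus,
    sum_eq_sum_componentsOf ω (sdiff_subset.trans (properEdges_subset_edgeFinset _)) hminus]
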